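/- Let C be a convex subset of the Orlicz heart H^Φ and X ∈ H^Φ. If X lies in the σ(H^Φ,H^Ψ)-closure of C, then X is the a.s.-limit of some sequence in C. Conversely, if C is norm bounded and a sequence in C converges a.s. to X ∈ H^Φ, then that sequence σ(H^Φ,H^Ψ)-converges to X. Hence a norm bounded convex set in H^Φ is σ(H^Φ,H^Ψ)-closed if and only if it is boundedly a.s. closed. -/

import Mathlib

open MeasureTheory Filter Set

noncomputable section

/-- An Orlicz function: convex, increasing, vanishing at 0. -/
structure OrliczFunction where
  toFun : ℝ → ℝ
  convexOn : ConvexOn ℝ (Set.Ici (0:ℝ)) toFun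
  monoOn : MonotoneOn toFun (Set.Ici (0:ℝ))
  map_zero : toFun 0 = 0

namespace Orlicz

variable {Ω : Type*} [MeasurableSpace Ω]

/-- Membership in the Orlicz space `L^Φ`. -/
def MemLp (Φ : OrliczFunction) (μ : Measure Ω) (X : Ω → ℝ) : Prop :=
  AEStronglyMeasurable X μ ∧
    ∃ c : ℝ, 0 < c ∧ Integrable (fun ω => Φ.toFun (|X ω| / c)) μ

/-- Membership in the Orlicz heart `H^Φ`. -/
def MemHeart (Φ : OrliczFunction) (μ : Measure Ω) (X : Ω → ℝ) : Prop :=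
  AEStronglyMeasurable X μ ∧
    ∀ c : ℝ, 0 < c → Integrable (fun ω => Φ.toFun (|X ω| / c)) μ

/-- The Luxemburg norm. -/
def luxNorm (Φ : OrliczFunction) (μ : Measure Ω) (X : Ω → ℝ) : ℝ :=
  sInf {c : ℝ | 0 < c ∧ Integrable (fun ω => Φ.toFun (|X ω| / c)) μ ∧
    ∫ ω, Φ.toFun (|X ω| / c) ∂μ ≤ 1}

/-- The dual pairing `E[XY]`. -/
def pairing (μ : Measure Ω) (X Y : Ω → ℝ) : ℝ := ∫ ω, X ω * Y ω ∂μ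

/-- Order convergence in `L^Φ`: a.s. convergence together with order boundedness. -/
def OrderConvTo (Φ : OrliczFunction) (μ : Measure Ω) (X : ℕ → Ω → ℝ) (L : Ω → ℝ) : Prop :=
  (∀ᵐ ω ∂μ, Tendsto (fun n => X n ω) atTop (nhds (L ω))) ∧
    ∃ Z : Ω → ℝ, MemLp Φ μ Z ∧ ∀ n, ∀ᵐ ω ∂μ, |X n ω| ≤ Z ω

/-- A set is order closed if it contains the order limits of its order convergent sequences. -/
def OrderClosed (Φ : OrliczFunction) (μ : Measure Ω) (C : Set (Ω → ℝ)) : Prop :=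
  ∀ (X : ℕ → Ω → ℝ) (L : Ω → ℝ), (∀ n, X n ∈ C) → MemLp Φ μ L →
    OrderConvTo Φ μ X L → L ∈ C

/-- The order closure of a set in `L^Φ`. -/
def orderClosure (Φ : OrliczFunction) (μ : Measure Ω) (C : Set (Ω → ℝ)) : Set (Ω → ℝ) :=
  {L | MemLp Φ μ L ∧ ∃ X : ℕ → Ω → ℝ, (∀ n, X n ∈ C) ∧ OrderConvTo Φ μ X L}

/-- Closure in the weak topology induced by pairing against functions satisfying `dual`,
within the space of functions satisfying `mem`. -/
def wClosure (mem dual : (Ω → ℝ) → Prop) (μ : Measure Ω) (C : Set (Ω → ℝ)) :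
    Set (Ω → ℝ) :=
  {X | mem X ∧ ∀ ε : ℝ, 0 < ε → ∀ F : Finset (Ω → ℝ), (∀ Y ∈ F, dual Y) →
    ∃ Z ∈ C, ∀ Y ∈ F, |pairing μ Z Y - pairing μ X Y| < ε}

/-- Weak closedness. -/
def WClosed (mem dual : (Ω → ℝ) → Prop) (μ : Measure Ω) (C : Set (Ω → ℝ)) : Prop :=
  wClosure mem dual μ C ⊆ C

/-- Weak sequential closedness. -/
def WSeqClosed (mem dual : (Ω → ℝ) → Prop) (μ : Measure Ω) (C : Set (Ω → ℝ)) : Prop :=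
  ∀ (X : ℕ → Ω → ℝ) (L : Ω → ℝ), (∀ n, X n ∈ C) → mem L →
    (∀ Y, dual Y → Tendsto (fun n => pairing μ (X n) Y) atTop (nhds (pairing μ L Y))) →
    L ∈ C

/-- The Δ₂-condition: `Φ(2t) < k·Φ(t)` for all large `t`. -/
def Delta2 (Φ : OrliczFunction) : Prop :=
  ∃ t₀ : ℝ, 0 < t₀ ∧ ∃ k : ℝ, ∀ t : ℝ, t₀ ≤ t → Φ.toFun (2 * t) < k * Φ.toFun t

/-- `(Φ,Ψ)` is a conjugate pair of Orlicz functions, with `Φ` superlinear and positive. -/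
def IsConjugate (Φ Ψ : OrliczFunction) : Prop :=
  (∀ s : ℝ, 0 ≤ s →
      Ψ.toFun s = sSup ((fun t => t * s - Φ.toFun t) '' Set.Ici (0:ℝ))) ∧
    Tendsto (fun t => Φ.toFun t / t) atTop atTop ∧ (∀ t : ℝ, 0 < t → 0 < Φ.toFun t)

/-- Fenchel conjugate of a functional on `L^Φ`. -/
def rhoStar (Φ : OrliczFunction) (μ : Measure Ω) (ρ : (Ω → ℝ) → EReal) (Y : Ω → ℝ) :
    EReal :=
  sSup {v : EReal | ∃ X : Ω → ℝ, MemLp Φ μ X ∧ v = ((pairing μ X Y : ℝ) : EReal) - ρ X}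

/-- A coherent risk measure on `L^Φ`: proper, subadditive, monotone, cash additive and
positively homogeneous. -/
def Coherent (Φ : OrliczFunction) (μ : Measure Ω) (ρ : (Ω → ℝ) → EReal) : Prop :=
  (∀ X, ρ X ≠ ⊥) ∧
    (∃ X, MemLp Φ μ X ∧ ρ X ≠ ⊤) ∧
    (∀ X Y, MemLp Φ μ X → MemLp Φ μ Y → ρ (X + Y) ≤ ρ X + ρ Y) ∧
    (∀ X Y, MemLp Φ μ X → MemLp Φ μ Y → (∀ᵐ ω ∂μ, Y ω ≤ X ω) → ρ X ≤ ρ Y) ∧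
    (∀ (X : Ω → ℝ) (m : ℝ), MemLp Φ μ X →
      ρ (fun ω => X ω + m) = ρ X - ((m : ℝ) : EReal)) ∧
    (∀ (X : Ω → ℝ) (l : ℝ), 0 < l → MemLp Φ μ X → ρ (l • X) = ((l : ℝ) : EReal) * ρ X)

/-- The Fatou property on `L^Φ`. -/
def Fatou (Φ : OrliczFunction) (μ : Measure Ω) (ρ : (Ω → ℝ) → EReal) : Prop :=
  ∀ (X : ℕ → Ω → ℝ) (L : Ω → ℝ), (∀ n, MemLp Φ μ (X n)) → MemLp Φ μ L →
    OrderConvTo Φ μ X L → ρ L ≤ liminf (fun n => ρ (X n)) atTop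

/-- Boundedly a.s. closed subsets of the Orlicz heart. -/
def BddAEClosed (Φ : OrliczFunction) (μ : Measure Ω) (C : Set (Ω → ℝ)) : Prop :=
  ∀ (S : ℕ → Ω → ℝ) (L : Ω → ℝ), (∀ n, S n ∈ C) →
    (∃ M : ℝ, ∀ n, luxNorm Φ μ (S n) ≤ M) → MemHeart Φ μ L →
    (∀ᵐ ω ∂μ, Tendsto (fun n => S n ω) atTop (nhds (L ω))) → L ∈ C

end Orlicz

open Orlicz

open scoped ENNReal

/-!
Heart elements are integrable because `Φ` is superlinear, and bounded functions lie in `H^Ψ`, so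
a point of the `σ(H^Φ,H^Ψ)`-closure of `C` lies in the `σ(L¹,L^∞)`-closure of `C`. For convex `C`
the Hahn–Banach theorem puts it in the `L¹`-norm closure; this needs every functional on `L¹` to
be integration against a bounded density, which we get from the Riesz representative of its
restriction to `L² ⊆ L¹`. An `L¹`-convergent sequence has an a.s. convergent subsequence.

Conversely, if `luxNorm Φ μ (S n) < c` then `E[Φ(|S n|/c)] ≤ 1`, and Young's inequality
`|xy| ≤ cd (Φ(|x|/c) + Ψ(|y|/d))` with `d = ε / 2c` bounds `E[|S n Y|; A]` by
`ε/2 + ε/2 · E[Ψ(|Y|/d); A]`. Hence `(S n * Y)` is uniformly integrable and Vitali's theorem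
turns a.s. convergence into convergence of `E[S n Y]`.
-/

namespace MeasureTheory

namespace Lp

section Inclusion

variable {Ω E : Type*} [MeasurableSpace Ω] {μ : Measure Ω} [IsFiniteMeasure μ]
  [NormedAddCommGroup E] [NormedSpace ℝ E] {p q : ℝ≥0∞} [Fact (1 ≤ p)] [Fact (1 ≤ q)]

def inclusionOfLE (hpq : p ≤ q) : Lp E q μ →L[ℝ] Lp E p μ :=
  LinearMap.mkContinuous
    { toFun := fun g => ((Lp.memLp g).mono_exponent hpq).toLp g
      map_add' := fun g h => by
        rw [← MemLp.toLp_add]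
        exact MemLp.toLp_congr _ _ (Lp.coeFn_add g h)
      map_smul' := fun c g => by
        rw [← MemLp.toLp_const_smul]
        exact MemLp.toLp_congr _ _ (Lp.coeFn_smul c g) }
    (μ univ ^ (1 / p.toReal - 1 / q.toReal)).toReal fun g => by
      change ‖((Lp.memLp g).mono_exponent hpq).toLp g‖ ≤ _
      rw [Lp.norm_toLp, Lp.norm_def, mul_comm, ← ENNReal.toReal_mul]
      have hexp : 0 ≤ 1 / p.toReal - 1 / q.toReal := by
        rcases eq_or_ne q ∞ with rfl | hq
        · simp
        have hp : p ≠ ∞ := ne_top_of_le_ne_top hq hpq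
        have hp0 : p ≠ 0 := (zero_lt_one.trans_le Fact.out).ne'
        exact sub_nonneg.2 (one_div_le_one_div_of_le (ENNReal.toReal_pos hp0 hp)
          (ENNReal.toReal_mono hq hpq))
      exact ENNReal.toReal_mono (ENNReal.mul_ne_top (Lp.eLpNorm_ne_top g)
          (ENNReal.rpow_ne_top_of_nonneg hexp (by finiteness)))
        (eLpNorm_le_eLpNorm_mul_rpow_measure_univ hpq (Lp.aestronglyMeasurable g))

theorem coeFn_inclusionOfLE (hpq : p ≤ q) (g : Lp E q μ) : inclusionOfLE hpq g =ᵐ[μ] g :=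
  MemLp.coeFn_toLp ((Lp.memLp g).mono_exponent hpq)

end Inclusion

section Indicator

variable {Ω F : Type*} [MeasurableSpace Ω] {μ : Measure Ω} {p : ℝ≥0∞}

theorem indicatorConstLp_eq_smul_one {s : Set Ω} (hs : MeasurableSet s) (hμs : μ s ≠ ∞) (c : ℝ) :
    indicatorConstLp p hs hμs c = c • indicatorConstLp p hs hμs (1 : ℝ) := by
  refine Lp.ext (indicatorConstLp_coeFn.trans ?_)
  filter_upwards [Lp.coeFn_smul c (indicatorConstLp p hs hμs (1 : ℝ)),
    indicatorConstLp_coeFn (p := p) (hs := hs) (hμs := hμs) (c := (1 : ℝ))] with ω h₁ h₂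
  rw [h₁, Pi.smul_apply, h₂, smul_eq_mul]
  by_cases hω : ω ∈ s <;> simp [hω]

theorem clm_ext_indicatorConstLp_one [NormedAddCommGroup F] [NormedSpace ℝ F] [Fact (1 ≤ p)]
    (hp : p ≠ ∞) {T T' : Lp ℝ p μ →L[ℝ] F}
    (h : ∀ s (hs : MeasurableSet s) (hμs : μ s < ∞),
      T (indicatorConstLp p hs hμs.ne 1) = T' (indicatorConstLp p hs hμs.ne 1)) :
    T = T' := by
  ext g
  induction g using Lp.induction hp with
  | indicatorConst c hs hμs =>
    rw [simpleFunc.coe_indicatorConst, indicatorConstLp_eq_smul_one, map_smul, map_smul,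
      h _ hs hμs]
  | add _ _ _ hf hg => rw [map_add, map_add, hf, hg]
  | isClosed => exact isClosed_eq T.continuous T'.continuous

end Indicator

section Classes

variable {Ω E : Type*} [MeasurableSpace Ω] [NormedAddCommGroup E]

def classesOf (p : ℝ≥0∞) (μ : Measure Ω) (C : Set (Ω → E)) : Set (Lp E p μ) :=
  {g | ∃ Z ∈ C, g =ᵐ[μ] Z}

variable {μ : Measure Ω} {p : ℝ≥0∞}

theorem convex_classesOf [NormedSpace ℝ E] {C : Set (Ω → E)} (hC : Convex ℝ C) :
    Convex ℝ (classesOf p μ C) := by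
  rintro g₁ ⟨Z₁, hZ₁C, hZ₁⟩ g₂ ⟨Z₂, hZ₂C, hZ₂⟩ a b ha hb hab
  refine ⟨a • Z₁ + b • Z₂, hC hZ₁C hZ₂C ha hb hab, ?_⟩
  filter_upwards [Lp.coeFn_add (a • g₁) (b • g₂), Lp.coeFn_smul a g₁, Lp.coeFn_smul b g₂,
    hZ₁, hZ₂] with ω h₁ h₂ h₃ h₄ h₅
  simp only [h₁, Pi.add_apply, h₂, h₃, Pi.smul_apply, h₄, h₅]

theorem exists_seq_tendsto_ae_of_mem_closure_classesOf [Fact (1 ≤ p)] {C : Set (Ω → E)}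
    {X : Lp E p μ} (hX : X ∈ closure (classesOf p μ C)) :
    ∃ S : ℕ → Ω → E, (∀ n, S n ∈ C) ∧ ∀ᵐ ω ∂μ, Tendsto (fun n => S n ω) atTop (nhds (X ω)) := by
  obtain ⟨g, hgC, hgX⟩ := mem_closure_iff_seq_limit.1 hX
  choose S hSC hSg using hgC
  obtain ⟨ns, -, hns⟩ :=
    ((tendstoInMeasure_of_tendsto_Lp hgX).congr_left hSg).exists_seq_tendsto_ae
  exact ⟨fun k => S (ns k), fun k => hSC (ns k), hns⟩

end Classes

end Lp

variable {Ω : Type*} [MeasurableSpace Ω] {μ : Measure Ω} [IsFiniteMeasure μ]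

theorem L1.exists_bounded_repr (f : Lp ℝ 1 μ →L[ℝ] ℝ) :
    ∃ Y : Ω → ℝ, AEStronglyMeasurable Y μ ∧ (∀ᵐ ω ∂μ, |Y ω| ≤ ‖f‖) ∧
      ∀ g : Lp ℝ 1 μ, f g = ∫ ω, g ω * Y ω ∂μ := by
  set Y : Lp ℝ 2 μ :=
    (InnerProductSpace.toDual ℝ (Lp ℝ 2 μ)).symm (f.comp (Lp.inclusionOfLE one_le_two))
  have hYint : Integrable Y μ := (Lp.memLp Y).integrable one_le_two
  have hset : ∀ s (hs : MeasurableSet s) (hμs : μ s ≠ ∞),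
      ∫ ω in s, Y ω ∂μ = f (indicatorConstLp 1 hs hμs 1) := by
    intro s hs hμs
    rw [← L2.inner_indicatorConstLp_one hs hμs, real_inner_comm,
      InnerProductSpace.toDual_symm_apply, ContinuousLinearMap.comp_apply]
    congr 1
    exact Lp.ext ((Lp.coeFn_inclusionOfLE _ _).trans
      (indicatorConstLp_coeFn.trans indicatorConstLp_coeFn.symm))
  have hset_le : ∀ s (hs : MeasurableSet s) (hμs : μ s < ∞),
      |∫ ω in s, Y ω ∂μ| ≤ ∫ _ in s, ‖f‖ ∂μ := by
    intro s hs hμs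
    rw [hset s hs hμs.ne, setIntegral_const, smul_eq_mul, mul_comm, ← Real.norm_eq_abs]
    refine (f.le_opNorm _).trans_eq ?_
    rw [norm_indicatorConstLp one_ne_zero ENNReal.one_ne_top]
    simp
  have hbound : ∀ᵐ ω ∂μ, |Y ω| ≤ ‖f‖ := by
    filter_upwards [ae_le_of_forall_setIntegral_le hYint (integrable_const ‖f‖)
        fun s hs hμs => (le_abs_self _).trans (hset_le s hs hμs),
      ae_le_of_forall_setIntegral_le hYint.neg (integrable_const ‖f‖)
        fun s hs hμs => by
          rw [Pi.neg_def, MeasureTheory.integral_neg]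
          exact (neg_le_abs _).trans (hset_le s hs hμs)] with ω h₁ h₂
    rw [Pi.neg_apply] at h₂
    exact abs_le.2 ⟨by linarith, h₁⟩
  have hY_top : MemLp Y ∞ μ := memLp_top_of_bound (Lp.aestronglyMeasurable Y) ‖f‖
    (by simpa only [Real.norm_eq_abs] using hbound)
  set T : Lp ℝ 1 μ →L[ℝ] ℝ := (ContinuousLinearMap.mul ℝ ℝ).lpPairing μ ∞ 1 (hY_top.toLp Y)
  have hT : ∀ g : Lp ℝ 1 μ, T g = ∫ ω, g ω * Y ω ∂μ := by
    intro g
    rw [ContinuousLinearMap.lpPairing_eq_integral]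
    refine integral_congr_ae ?_
    filter_upwards [hY_top.coeFn_toLp] with ω hω
    rw [ContinuousLinearMap.mul_apply', hω, mul_comm]
  have hfT : f = T := by
    refine Lp.clm_ext_indicatorConstLp_one ENNReal.one_ne_top fun s hs hμs => ?_
    rw [hT, ← hset s hs hμs.ne, ← integral_indicator hs]
    refine integral_congr_ae ?_
    filter_upwards [indicatorConstLp_coeFn (p := 1) (hs := hs) (hμs := hμs.ne) (c := (1 : ℝ))]
      with ω hω
    by_cases h : ω ∈ s <;> simp [hω, h]
  exact ⟨Y, Lp.aestronglyMeasurable Y, hbound, fun g => by rw [hfT, hT]⟩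

theorem Integrable.toL1_mem_closure_classesOf {C : Set (Ω → ℝ)}
    (hCint : ∀ Z ∈ C, Integrable Z μ) (hconv : Convex ℝ C) {X : Ω → ℝ} (hX : Integrable X μ)
    (happrox : ∀ Y : Ω → ℝ, AEStronglyMeasurable Y μ → (∃ K, ∀ᵐ ω ∂μ, |Y ω| ≤ K) →
      ∀ ε > 0, ∃ Z ∈ C, |∫ ω, Z ω * Y ω ∂μ - ∫ ω, X ω * Y ω ∂μ| < ε) :
    hX.toL1 X ∈ closure (Lp.classesOf 1 μ C) := by
  by_contra hnot
  obtain ⟨f, u, hCu, huX⟩ := geometric_hahn_banach_closed_point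
    (Lp.convex_classesOf hconv).closure isClosed_closure hnot
  obtain ⟨Y, hYm, hYb, hfY⟩ := L1.exists_bounded_repr f
  have hf : ∀ Z (hZ : Integrable Z μ), f (hZ.toL1 Z) = ∫ ω, Z ω * Y ω ∂μ := fun Z hZ => by
    rw [hfY]
    refine integral_congr_ae ?_
    filter_upwards [hZ.coeFn_toL1] with ω hω
    rw [hω]
  obtain ⟨Z, hZC, hZ⟩ := happrox Y hYm ⟨_, hYb⟩ _ (sub_pos.2 huX)
  have hZu := hCu _ (subset_closure ⟨Z, hZC, (hCint Z hZC).coeFn_toL1⟩)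
  rw [hf] at huX hZu hZ
  linarith [(abs_lt.1 hZ).1]

theorem tendsto_integral_of_tendsto_ae_of_unifIntegrable
    {F : ℕ → Ω → ℝ} {G : Ω → ℝ} (hF : ∀ n, Integrable (F n) μ) (hG : Integrable G μ)
    (hui : UnifIntegrable F 1 μ) (hae : ∀ᵐ ω ∂μ, Tendsto (fun n => F n ω) atTop (nhds (G ω))) :
    Tendsto (fun n => ∫ ω, F n ω ∂μ) atTop (nhds (∫ ω, G ω ∂μ)) := by
  refine tendsto_integral_of_L1 G hG.1 (Eventually.of_forall hF) ?_
  simpa only [eLpNorm_one_eq_lintegral_enorm, Pi.sub_apply] using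
    tendsto_Lp_finite_of_tendsto_ae le_rfl ENNReal.one_ne_top (fun n => (hF n).1)
      (memLp_one_iff_integrable.2 hG) hui hae

end MeasureTheory

namespace OrliczFunction

variable (Φ : OrliczFunction) {s t : ℝ}

theorem nonneg (ht : 0 ≤ t) : 0 ≤ Φ.toFun t :=
  Φ.map_zero ▸ Φ.monoOn (mem_Ici.2 le_rfl) ht ht

theorem mono (hs : 0 ≤ s) (hst : s ≤ t) : Φ.toFun s ≤ Φ.toFun t :=
  Φ.monoOn hs (hs.trans hst) hst

theorem apply_div_le {c : ℝ} (hc : 1 ≤ c) (ht : 0 ≤ t) : Φ.toFun (t / c) ≤ Φ.toFun t / c := by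
  have hc₀ : 0 < c := one_pos.trans_le hc
  have h := Φ.convexOn.2 (mem_Ici.2 ht) (mem_Ici.2 le_rfl) (inv_nonneg.2 hc₀.le)
    (sub_nonneg.2 (inv_le_one_of_one_le₀ hc)) (add_sub_cancel _ _)
  simpa [Φ.map_zero, div_eq_inv_mul] using h

theorem eventually_mul_le (hΦ : Tendsto (fun t => Φ.toFun t / t) atTop atTop) (r : ℝ) :
    ∀ᶠ t in atTop, r * t ≤ Φ.toFun t := by
  filter_upwards [hΦ.eventually_ge_atTop r, eventually_gt_atTop 0] with t h ht
  rwa [le_div_iff₀ ht] at h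

theorem aestronglyMeasurable_comp_abs_div {Ω : Type*} [MeasurableSpace Ω] {μ : Measure Ω}
    {X : Ω → ℝ} (hX : AEStronglyMeasurable X μ) {c : ℝ} (hc : 0 < c) :
    AEStronglyMeasurable (fun ω => Φ.toFun (|X ω| / c)) μ := by
  have hmono : Monotone fun t => Φ.toFun (max t 0) := fun a b hab =>
    Φ.mono (le_max_right _ _) (max_le_max hab le_rfl)
  have hpos : ∀ ω, max (|X ω| / c) 0 = |X ω| / c := fun ω => max_eq_left (by positivity)
  simpa only [hpos, Function.comp_def] using (hmono.measurable.comp_aemeasurable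
    ((measurable_abs.comp_aemeasurable hX.aemeasurable).div_const c)).aestronglyMeasurable

end OrliczFunction

namespace Orlicz

variable {Φ Ψ : OrliczFunction}

theorem IsConjugate.mul_le_add (h : IsConjugate Φ Ψ) {a b : ℝ} (ha : 0 ≤ a) (hb : 0 ≤ b) :
    a * b ≤ Φ.toFun a + Ψ.toFun b := by
  obtain ⟨T, hT⟩ := (Φ.eventually_mul_le h.2.1 (b + 1)).exists_forall_of_atTop
  have hbdd : BddAbove ((fun t => t * b - Φ.toFun t) '' Ici 0) := by
    refine ⟨max T 0 * b, ?_⟩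
    rintro _ ⟨t, ht, rfl⟩
    rcases le_total t (max T 0) with htT | hTt
    · nlinarith [Φ.nonneg ht]
    · nlinarith [hT t ((le_max_left _ _).trans hTt), le_max_right T 0]
  have := le_csSup hbdd (mem_image_of_mem _ (mem_Ici.2 ha))
  rw [← h.1 b hb] at this
  linarith

theorem IsConjugate.abs_mul_le (h : IsConjugate Φ Ψ) {c d : ℝ} (hc : 0 < c) (hd : 0 < d)
    (x y : ℝ) : |x * y| ≤ c * d * (Φ.toFun (|x| / c) + Ψ.toFun (|y| / d)) := calc
  |x * y| = c * d * (|x| / c * (|y| / d)) := by rw [abs_mul]; field_simp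
  _ ≤ _ := by gcongr; exact h.mul_le_add (by positivity) (by positivity)

variable {Ω : Type*} [MeasurableSpace Ω] {μ : Measure Ω}

theorem MemHeart.integrable [IsFiniteMeasure μ]
    (hΦ : Tendsto (fun t => Φ.toFun t / t) atTop atTop) {X : Ω → ℝ} (hX : MemHeart Φ μ X) :
    Integrable X μ := by
  obtain ⟨T, hT⟩ := (Φ.eventually_mul_le hΦ 1).exists_forall_of_atTop
  refine ((integrable_const |T|).add (hX.2 1 one_pos)).mono' hX.1 (ae_of_all _ fun ω => ?_)
  rw [Real.norm_eq_abs, Pi.add_apply, div_one]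
  rcases le_total T |X ω| with hTX | hXT
  · linarith [hT _ hTX, abs_nonneg T]
  · linarith [le_abs_self T, Φ.nonneg (abs_nonneg (X ω))]

theorem MemHeart.integrable_mul (h : IsConjugate Φ Ψ) {X Y : Ω → ℝ} (hX : MemHeart Φ μ X)
    (hY : MemHeart Ψ μ Y) : Integrable (fun ω => X ω * Y ω) μ :=
  (((hX.2 1 one_pos).add (hY.2 1 one_pos)).const_mul (1 * 1)).mono' (hX.1.mul hY.1)
    (ae_of_all _ fun ω => h.abs_mul_le one_pos one_pos (X ω) (Y ω))

theorem memHeart_of_ae_abs_le [IsFiniteMeasure μ] {Y : Ω → ℝ} (hY : AEStronglyMeasurable Y μ)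
    {K : ℝ} (hK : ∀ᵐ ω ∂μ, |Y ω| ≤ K) : MemHeart Ψ μ Y := by
  refine ⟨hY, fun c hc => (integrable_const (Ψ.toFun (K / c))).mono'
    (Ψ.aestronglyMeasurable_comp_abs_div hY hc) ?_⟩
  filter_upwards [hK] with ω hω
  rw [Real.norm_of_nonneg (Ψ.nonneg (by positivity))]
  exact Ψ.mono (by positivity) (by gcongr)

theorem integral_le_one_of_luxNorm_lt [IsFiniteMeasure μ] {X : Ω → ℝ} (hX : MemHeart Φ μ X)
    {c : ℝ} (hc : luxNorm Φ μ X < c) : ∫ ω, Φ.toFun (|X ω| / c) ∂μ ≤ 1 := by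
  set c₀ := max 1 (∫ ω, Φ.toFun (|X ω| / 1) ∂μ)
  have hc₀ : 0 < c₀ := one_pos.trans_le (le_max_left _ _)
  have hmem : c₀ ∈ {c : ℝ | 0 < c ∧ Integrable (fun ω => Φ.toFun (|X ω| / c)) μ ∧
      ∫ ω, Φ.toFun (|X ω| / c) ∂μ ≤ 1} := by
    refine ⟨hc₀, hX.2 c₀ hc₀, ?_⟩
    calc ∫ ω, Φ.toFun (|X ω| / c₀) ∂μ ≤ ∫ ω, Φ.toFun (|X ω| / 1) / c₀ ∂μ :=
          integral_mono (hX.2 c₀ hc₀) ((hX.2 1 one_pos).div_const c₀) fun ω => by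
            simpa using Φ.apply_div_le (le_max_left _ _) (abs_nonneg (X ω))
      _ ≤ 1 := by rw [integral_div, div_le_one hc₀]; exact le_max_right _ _
  obtain ⟨c', ⟨hc'₀, hc'i, hc'1⟩, hc'c⟩ := exists_lt_of_csInf_lt ⟨c₀, hmem⟩ hc
  refine le_trans (integral_mono (hX.2 c (hc'₀.trans hc'c)) hc'i fun ω => ?_) hc'1
  exact Φ.mono (div_nonneg (abs_nonneg _) (hc'₀.trans hc'c).le)
    (div_le_div_of_nonneg_left (abs_nonneg _) hc'₀ hc'c.le)

theorem unifIntegrable_mul (h : IsConjugate Φ Ψ) {ι : Type*} {S : ι → Ω → ℝ} {c : ℝ}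
    (hc : 0 < c) (hSi : ∀ i, Integrable (fun ω => Φ.toFun (|S i ω| / c)) μ)
    (hS1 : ∀ i, ∫ ω, Φ.toFun (|S i ω| / c) ∂μ ≤ 1) {Y : Ω → ℝ} (hY : MemHeart Ψ μ Y) :
    UnifIntegrable (fun i ω => S i ω * Y ω) 1 μ := by
  intro ε hε
  set d := ε / (2 * c)
  have hd : 0 < d := by positivity
  set g := fun ω => Ψ.toFun (|Y ω| / d)
  have hg : Integrable g μ := hY.2 d hd
  have eLpNorm_one_eq_ofReal : ∀ F : Ω → ℝ, Integrable F μ →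
      eLpNorm F 1 μ = ENNReal.ofReal (∫ ω, ‖F ω‖ ∂μ) := fun F hF => by
    rw [eLpNorm_one_eq_lintegral_enorm, ofReal_integral_norm_eq_lintegral_enorm hF]
  obtain ⟨δ, hδ, hδs⟩ := (memLp_one_iff_integrable.2 hg).eLpNorm_indicator_le le_rfl
    ENNReal.one_ne_top one_pos
  refine ⟨δ, hδ, fun i s hs hμs => ?_⟩
  have hgs : ∫ ω, s.indicator g ω ∂μ ≤ 1 := by
    have := hδs s hs hμs
    rw [eLpNorm_one_eq_ofReal _ (hg.indicator hs), ENNReal.ofReal_le_ofReal_iff zero_le_one] at this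
    exact (integral_mono (hg.indicator hs) (hg.indicator hs).norm
      fun ω => Real.le_norm_self _).trans this
  set H := fun ω => c * d * Φ.toFun (|S i ω| / c) + c * d * s.indicator g ω
  have hH : Integrable H μ := ((hSi i).const_mul _).add ((hg.indicator hs).const_mul _)
  have hH₀ : ∀ ω, 0 ≤ H ω := fun ω =>
    add_nonneg (mul_nonneg (by positivity) (Φ.nonneg (by positivity)))
      (mul_nonneg (by positivity) (indicator_nonneg (fun ω _ => Ψ.nonneg (by positivity)) ω))
  have hSY : ∀ ω, ‖s.indicator (fun ω => S i ω * Y ω) ω‖ ≤ H ω := fun ω => by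
    by_cases hω : ω ∈ s
    · simpa [H, hω, mul_add] using h.abs_mul_le hc hd (S i ω) (Y ω)
    · simpa [hω] using hH₀ ω
  calc eLpNorm (s.indicator fun ω => S i ω * Y ω) 1 μ ≤ eLpNorm H 1 μ :=
        eLpNorm_mono_real hSY
    _ = ENNReal.ofReal (∫ ω, H ω ∂μ) := by
        simp_rw [eLpNorm_one_eq_ofReal H hH, Real.norm_of_nonneg (hH₀ _)]
    _ ≤ ENNReal.ofReal ε := by
        refine ENNReal.ofReal_le_ofReal ?_
        rw [integral_add ((hSi i).const_mul _) ((hg.indicator hs).const_mul _), integral_const_mul,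
          integral_const_mul]
        calc c * d * ∫ ω, Φ.toFun (|S i ω| / c) ∂μ + c * d * ∫ ω, s.indicator g ω ∂μ
            ≤ c * d * 1 + c * d * 1 := by gcongr; exact hS1 i
          _ = ε := by simp only [d]; field_simp; ring

theorem tendsto_pairing_of_tendsto_ae [IsFiniteMeasure μ] (h : IsConjugate Φ Ψ)
    {S : ℕ → Ω → ℝ} {X : Ω → ℝ} (hS : ∀ n, MemHeart Φ μ (S n)) {M : ℝ}
    (hSM : ∀ n, luxNorm Φ μ (S n) ≤ M) (hX : MemHeart Φ μ X)
    (hae : ∀ᵐ ω ∂μ, Tendsto (fun n => S n ω) atTop (nhds (X ω)))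
    {Y : Ω → ℝ} (hY : MemHeart Ψ μ Y) :
    Tendsto (fun n => pairing μ (S n) Y) atTop (nhds (pairing μ X Y)) := by
  have hc : 0 < max M 0 + 1 := by positivity
  refine tendsto_integral_of_tendsto_ae_of_unifIntegrable
    (fun n => (hS n).integrable_mul h hY) (hX.integrable_mul h hY)
    (unifIntegrable_mul h hc (fun n => (hS n).2 _ hc)
      (fun n => integral_le_one_of_luxNorm_lt (hS n) ?_) hY) ?_
  · linarith [hSM n, le_max_left M 0]
  · filter_upwards [hae] with ω hω
    exact hω.mul_const (Y ω)

theorem exists_seq_tendsto_ae_of_mem_wClosure [IsFiniteMeasure μ] (h : IsConjugate Φ Ψ)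
    {C : Set (Ω → ℝ)} (hCsub : ∀ X ∈ C, MemHeart Φ μ X) (hconv : Convex ℝ C) {X : Ω → ℝ}
    (hX : X ∈ wClosure (MemHeart Φ μ) (MemHeart Ψ μ) μ C) :
    ∃ S : ℕ → Ω → ℝ, (∀ n, S n ∈ C) ∧ ∀ᵐ ω ∂μ, Tendsto (fun n => S n ω) atTop (nhds (X ω)) := by
  have hXint := hX.1.integrable h.2.1
  have hmem := hXint.toL1_mem_closure_classesOf (fun Z hZ => (hCsub Z hZ).integrable h.2.1) hconv
    fun Y hYm ⟨_, hK⟩ ε hε => by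
      obtain ⟨Z, hZC, hZ⟩ := hX.2 ε hε {Y} (by simpa using memHeart_of_ae_abs_le hYm hK)
      exact ⟨Z, hZC, hZ Y (Finset.mem_singleton_self Y)⟩
  obtain ⟨S, hSC, hS⟩ := Lp.exists_seq_tendsto_ae_of_mem_closure_classesOf hmem
  refine ⟨S, hSC, ?_⟩
  filter_upwards [hS, hXint.coeFn_toL1] with ω hSω hXω
  rwa [hXω] at hSω

theorem WClosed.bddAEClosed [IsFiniteMeasure μ] (h : IsConjugate Φ Ψ) {C : Set (Ω → ℝ)}
    (hCsub : ∀ X ∈ C, MemHeart Φ μ X) (hC : WClosed (MemHeart Φ μ) (MemHeart Ψ μ) μ C) :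
    BddAEClosed Φ μ C := by
  rintro S L hSC ⟨M, hM⟩ hL hae
  refine hC ⟨hL, fun ε hε F hF => ?_⟩
  have hclose : ∀ᶠ n in atTop, ∀ Y ∈ F, |pairing μ (S n) Y - pairing μ L Y| < ε :=
    (eventually_all_finset F).2 fun Y hY => by
      simpa only [Real.dist_eq] using Metric.tendsto_nhds.1
        (tendsto_pairing_of_tendsto_ae h (fun n => hCsub _ (hSC n)) hM hL hae (hF Y hY)) ε hε
  obtain ⟨n, hn⟩ := hclose.exists
  exact ⟨S n, hSC n, hn⟩

theorem BddAEClosed.wClosed [IsFiniteMeasure μ] (h : IsConjugate Φ Ψ) {C : Set (Ω → ℝ)}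
    (hCsub : ∀ X ∈ C, MemHeart Φ μ X) (hconv : Convex ℝ C)
    (hbdd : ∃ M : ℝ, ∀ X ∈ C, luxNorm Φ μ X ≤ M) (hC : BddAEClosed Φ μ C) :
    WClosed (MemHeart Φ μ) (MemHeart Ψ μ) μ C := by
  intro X hX
  obtain ⟨S, hSC, hae⟩ := exists_seq_tendsto_ae_of_mem_wClosure h hCsub hconv hX
  obtain ⟨M, hM⟩ := hbdd
  exact hC S X hSC ⟨M, fun n => hM _ (hSC n)⟩ hX.1 hae

end Orlicz

theorem heart_wClosure_ae_characterization_general {Ω : Type*} [MeasurableSpace Ω]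
    (μ : Measure Ω) [IsProbabilityMeasure μ] (Φ Ψ : OrliczFunction)
    (hconj : IsConjugate Φ Ψ)
    (C : Set (Ω → ℝ)) (hCsub : ∀ X ∈ C, MemHeart Φ μ X) (hconv : Convex ℝ C) :
    (∀ X, X ∈ wClosure (MemHeart Φ μ) (MemHeart Ψ μ) μ C →
      ∃ S : ℕ → Ω → ℝ, (∀ n, S n ∈ C) ∧
        ∀ᵐ ω ∂μ, Tendsto (fun n => S n ω) atTop (nhds (X ω))) ∧
    ((∃ M : ℝ, ∀ X ∈ C, luxNorm Φ μ X ≤ M) →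
      ∀ (S : ℕ → Ω → ℝ) (X : Ω → ℝ), (∀ n, S n ∈ C) → MemHeart Φ μ X →
        (∀ᵐ ω ∂μ, Tendsto (fun n => S n ω) atTop (nhds (X ω))) →
        ∀ Y, MemHeart Ψ μ Y →
          Tendsto (fun n => pairing μ (S n) Y) atTop (nhds (pairing μ X Y))) ∧
    ((∃ M : ℝ, ∀ X ∈ C, luxNorm Φ μ X ≤ M) →
      (WClosed (MemHeart Φ μ) (MemHeart Ψ μ) μ C ↔ BddAEClosed Φ μ C)) := by
  refine ⟨fun X hX => exists_seq_tendsto_ae_of_mem_wClosure hconj hCsub hconv hX,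
    fun ⟨M, hM⟩ S X hS hX hae Y hY => tendsto_pairing_of_tendsto_ae hconj
      (fun n => hCsub _ (hS n)) (fun n => hM _ (hS n)) hX hae hY,
    fun hbdd => ⟨WClosed.bddAEClosed hconj hCsub, BddAEClosed.wClosed hconj hCsub hconv hbdd⟩⟩

/-- For a convex set `C` in the Orlicz heart: every point of the `σ(H^Φ,H^Ψ)`-closure
is an a.s. limit from `C`; conversely, for norm bounded `C`, a.s. convergent sequences
from `C` are `σ(H^Φ,H^Ψ)`-convergent; hence a norm bounded convex set is
`σ(H^Φ,H^Ψ)`-closed iff it is boundedly a.s. closed. -/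
theorem heart_wClosure_ae_characterization {Ω : Type*} [MeasurableSpace Ω]
    (μ : Measure Ω) [IsProbabilityMeasure μ] [NullSingletonClass μ] (Φ Ψ : OrliczFunction)
    (hconj : IsConjugate Φ Ψ)
    (C : Set (Ω → ℝ)) (hCsub : ∀ X ∈ C, MemHeart Φ μ X) (hconv : Convex ℝ C) :
    (∀ X, X ∈ wClosure (MemHeart Φ μ) (MemHeart Ψ μ) μ C →
      ∃ S : ℕ → Ω → ℝ, (∀ n, S n ∈ C) ∧
        ∀ᵐ ω ∂μ, Tendsto (fun n => S n ω) atTop (nhds (X ω))) ∧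
    ((∃ M : ℝ, ∀ X ∈ C, luxNorm Φ μ X ≤ M) →
      ∀ (S : ℕ → Ω → ℝ) (X : Ω → ℝ), (∀ n, S n ∈ C) → MemHeart Φ μ X →
        (∀ᵐ ω ∂μ, Tendsto (fun n => S n ω) atTop (nhds (X ω))) →
        ∀ Y, MemHeart Ψ μ Y →
          Tendsto (fun n => pairing μ (S n) Y) atTop (nhds (pairing μ X Y))) ∧
    ((∃ M : ℝ, ∀ X ∈ C, luxNorm Φ μ X ≤ M) →
      (WClosed (MemHeart Φ μ) (MemHeart Ψ μ) μ C ↔ BddAEClosed Φ μ C)) :=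
  heart_wClosure_ae_characterization_general μ Φ Ψ hconj C hCsub hconv
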